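/- arXiv:1511.03153 — 7 statements merged into one kernel-verified Lean document; each statement's English description precedes it below -/
import Mathlib

section
/- Let Z, h_max ∈ ℝ with h_max < Z, let φ ∈ (0, π), and let h : ℝ → ℝ be differentiable with h(x) ≤ h_max for all x, and suppose there exists κ < sin φ with |h'(x) cos φ| ≤ κ for all x ∈ ℝ. Then for every X ∈ ℝ there exists a unique s ≥ 0 such that Z − s sin φ = h(X − s cos φ); moreover s > 0. -/
/-!
Along the ray, the gap `F s = Z - s sin φ - h (X - s cos φ)` between the height of the ray and the
cloud top starts positive (`h ≤ hmax < Z`) and, by the slope bound, has derivative at most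
`-(sin φ - κ) < 0`. So `F` is strictly decreasing and falls below zero by `s = F 0 / (sin φ - κ)`:
it has exactly one zero, which lies at positive distance.
-/

open Real Set

lemma exists_mem_Icc_eq_zero_of_deriv_le_neg {F : ℝ → ℝ} (hF : Differentiable ℝ F) {c : ℝ}
    (hc : 0 < c) (hderiv : ∀ x, deriv F x ≤ -c) (h0 : 0 ≤ F 0) :
    ∃ s ∈ Icc 0 (F 0 / c), F s = 0 := by
  have hS : 0 ≤ F 0 / c := div_nonneg h0 hc.le
  have hFS : F (F 0 / c) ≤ 0 := by
    have := image_sub_le_mul_sub_of_deriv_le hF hderiv hS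
    rw [sub_zero, neg_mul, mul_div_cancel₀ _ hc.ne'] at this
    linarith
  exact intermediate_value_Icc' hS hF.continuous.continuousOn ⟨hFS, h0⟩

lemma existsUnique_nonneg_eq_zero_of_deriv_le_neg {F : ℝ → ℝ} (hF : Differentiable ℝ F) {c : ℝ}
    (hc : 0 < c) (hderiv : ∀ x, deriv F x ≤ -c) (h0 : 0 ≤ F 0) :
    ∃! s, 0 ≤ s ∧ F s = 0 := by
  obtain ⟨s, hs, hFs⟩ := exists_mem_Icc_eq_zero_of_deriv_le_neg hF hc hderiv h0
  have hanti : StrictAnti F := strictAnti_of_deriv_neg fun x => (hderiv x).trans_lt (by linarith)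
  exact ⟨s, ⟨hs.1, hFs⟩, fun t ht => hanti.injective (ht.2.trans hFs.symm)⟩

lemma hasDerivAt_sub_sub_comp_sub_mul {h : ℝ → ℝ} {Z X a b s : ℝ}
    (hh : DifferentiableAt ℝ h (X - s * b)) :
    HasDerivAt (fun t => Z - t * a - h (X - t * b)) (-a + deriv h (X - s * b) * b) s := by
  have hline : HasDerivAt (fun t => X - t * b) (-b) s := by
    simpa using ((hasDerivAt_id s).mul_const b).const_sub X
  have hray : HasDerivAt (fun t => Z - t * a) (-a) s := by
    simpa using ((hasDerivAt_id s).mul_const a).const_sub Z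
  exact (hray.sub (hh.hasDerivAt.comp s hline)).congr_deriv (by ring)

theorem cloud_ray_intersection_exists_unique_general
    (Z hmax : ℝ) (hZ : hmax < Z) (φ : ℝ)
    (h : ℝ → ℝ) (hdiff : Differentiable ℝ h)
    (hbound : ∀ x : ℝ, h x ≤ hmax)
    (κ : ℝ) (hκ : κ < Real.sin φ)
    (hslope : ∀ x : ℝ, |deriv h x * Real.cos φ| ≤ κ) :
    ∀ X : ℝ,
      (∃! s : ℝ, 0 ≤ s ∧ Z - s * Real.sin φ = h (X - s * Real.cos φ)) ∧
      (∀ s : ℝ, 0 ≤ s → Z - s * Real.sin φ = h (X - s * Real.cos φ) → 0 < s) := by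
  intro X
  set F : ℝ → ℝ := fun s => Z - s * sin φ - h (X - s * cos φ)
  have hF' (s : ℝ) := hasDerivAt_sub_sub_comp_sub_mul (Z := Z) (a := sin φ) (hdiff (X - s * cos φ))
  have hderiv (s : ℝ) : deriv F s ≤ -(sin φ - κ) := by
    rw [(hF' s).deriv]
    linarith [le_abs_self (deriv h (X - s * cos φ) * cos φ), hslope (X - s * cos φ)]
  have hF0 : 0 < F 0 := by
    simp only [F, zero_mul, sub_zero]
    linarith [hbound X]
  have hzero (s : ℝ) : Z - s * sin φ = h (X - s * cos φ) ↔ F s = 0 := sub_eq_zero.symm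
  simp only [hzero]
  refine ⟨existsUnique_nonneg_eq_zero_of_deriv_le_neg (fun s => (hF' s).differentiableAt)
    (sub_pos.mpr hκ) hderiv hF0.le, fun s hs hFs => hs.lt_of_ne ?_⟩
  rintro rfl
  exact hF0.ne' hFs

/-- existence, uniqueness and positivity of the travel distance `s`
along the observation ray from the sensor `(X, Z)` in direction `(cos φ, sin φ)`
to the cloud boundary `(x, h x)`. -/
theorem cloud_ray_intersection_exists_unique
    (Z hmax : ℝ) (hZ : hmax < Z) (φ : ℝ) (hφ : φ ∈ Set.Ioo 0 Real.pi)
    (h : ℝ → ℝ) (hdiff : Differentiable ℝ h)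
    (hbound : ∀ x : ℝ, h x ≤ hmax)
    (κ : ℝ) (hκ : κ < Real.sin φ)
    (hslope : ∀ x : ℝ, |deriv h x * Real.cos φ| ≤ κ) :
    ∀ X : ℝ,
      (∃! s : ℝ, 0 ≤ s ∧ Z - s * Real.sin φ = h (X - s * Real.cos φ)) ∧
      (∀ s : ℝ, 0 ≤ s → Z - s * Real.sin φ = h (X - s * Real.cos φ) → 0 < s) :=
  cloud_ray_intersection_exists_unique_general Z hmax hZ φ h hdiff hbound κ hκ hslope
end

section
/- Let Z, X, φ ∈ ℝ with cos φ ≠ 0, let h₀ : ℝ → ℝ be differentiable, let δh : ℝ → ℝ be continuous at x₀, and let x : (−ε, ε) → ℝ be continuous, differentiable at 0, with x(0) = x₀. Suppose Z − (h₀(x(t)) + t·δh(x(t))) = (X − x(t)) tan φ for all t ∈ (−ε, ε) and tan φ ≠ h₀'(x₀). Then x'(0) = δh(x₀) / (tan φ − h₀'(x₀)). -/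
/-! Differentiating the intersection condition `Z - (h₀ (x t) + t δh (x t)) = (X - x t) tan φ`
at `t = 0` gives the linear equation `h₀'(x₀) x'(0) + δh(x₀) = x'(0) tan φ`. The product
`t δh (x t)` has derivative `δh(x₀)` at `0` because its difference quotient is `δh (x t)` itself,
which tends to `δh(x₀)`. -/

open Filter Topology

theorem hasDerivAt_sub_smul_of_continuousAt {𝕜 E : Type*} [NontriviallyNormedField 𝕜]
    [NormedAddCommGroup E] [NormedSpace 𝕜 E] {g : 𝕜 → E} {a : 𝕜} (hg : ContinuousAt g a) :
    HasDerivAt (fun t => (t - a) • g t) (g a) a := by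
  rw [hasDerivAt_iff_tendsto_slope]
  refine (hg.tendsto.mono_left nhdsWithin_le_nhds).congr' ?_
  filter_upwards [self_mem_nhdsWithin] with t (ht : t ≠ a)
  rw [slope_def_module, sub_self, zero_smul, sub_zero, smul_smul,
    inv_mul_cancel₀ (sub_ne_zero.mpr ht), one_smul]

theorem cloud_intersection_first_variation_general
    (Z X φ : ℝ)
    (h₀ : ℝ → ℝ) (hh₀ : Differentiable ℝ h₀)
    (δh : ℝ → ℝ) (x₀ : ℝ) (hδh : ContinuousAt δh x₀)
    (ε : ℝ) (hε : 0 < ε)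
    (x : ℝ → ℝ)
    (hxd : DifferentiableAt ℝ x 0) (hx0 : x 0 = x₀)
    (heq : ∀ t ∈ Set.Ioo (-ε) ε,
      Z - (h₀ (x t) + t * δh (x t)) = (X - x t) * Real.tan φ)
    (hne : Real.tan φ ≠ deriv h₀ x₀) :
    deriv x 0 = δh x₀ / (Real.tan φ - deriv h₀ x₀) := by
  have hx : HasDerivAt x (deriv x 0) 0 := hxd.hasDerivAt
  have hh₀x : HasDerivAt (fun t => h₀ (x t)) (deriv h₀ x₀ * deriv x 0) 0 := by
    subst hx0
    exact (hh₀ (x 0)).hasDerivAt.comp 0 hx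
  have hδhx : HasDerivAt (fun t => t * δh (x t)) (δh x₀) 0 := by
    have hcont : ContinuousAt (fun t => δh (x t)) 0 := by
      subst hx0
      exact hδh.comp hx.continuousAt
    simpa [hx0] using hasDerivAt_sub_smul_of_continuousAt hcont
  have hlhs := (hasDerivAt_const (0 : ℝ) Z).sub (hh₀x.add hδhx)
  have hrhs := ((hasDerivAt_const (0 : ℝ) X).sub hx).mul_const (Real.tan φ)
  have heq_near : (fun t => Z - (h₀ (x t) + t * δh (x t))) =ᶠ[𝓝 0]
      fun t => (X - x t) * Real.tan φ :=
    eventually_of_mem (Ioo_mem_nhds (neg_neg_of_pos hε) hε) heq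
  have hlin := hlhs.unique (hrhs.congr_of_eventuallyEq heq_near)
  rw [eq_div_iff (sub_ne_zero.mpr hne)]
  linarith

/-- first variation of the intersection abscissa under the
perturbation `h_t = h₀ + t·δh` of the cloud height:
`δx = δh(x₀) / (tan φ - h₀'(x₀))`. -/
theorem cloud_intersection_first_variation
    (Z X φ : ℝ) (hcos : Real.cos φ ≠ 0)
    (h₀ : ℝ → ℝ) (hh₀ : Differentiable ℝ h₀)
    (δh : ℝ → ℝ) (x₀ : ℝ) (hδh : ContinuousAt δh x₀)
    (ε : ℝ) (hε : 0 < ε)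
    (x : ℝ → ℝ) (hxc : ContinuousOn x (Set.Ioo (-ε) ε))
    (hxd : DifferentiableAt ℝ x 0) (hx0 : x 0 = x₀)
    (heq : ∀ t ∈ Set.Ioo (-ε) ε,
      Z - (h₀ (x t) + t * δh (x t)) = (X - x t) * Real.tan φ)
    (hne : Real.tan φ ≠ deriv h₀ x₀) :
    deriv x 0 = δh x₀ / (Real.tan φ - deriv h₀ x₀) :=
  cloud_intersection_first_variation_general Z X φ h₀ hh₀ δh x₀ hδh ε hε x hxd hx0 heq hne
end

section
/- Let I ⊆ ℝ be nonempty, let f₁, f₂, k₁, k₂ : I → ℝ, and let g₁, g₂ : (0, π) → ℝ with g₁(π/2) = g₂(π/2) = 0. Suppose f₁(x) + g₁(φ) + (cos φ / sin φ)·k₁(x) = f₂(x) + g₂(φ) + (cos φ / sin φ)·k₂(x) for all x ∈ I and all φ ∈ (0, π). Then f₁ = f₂ on I, and there exists λ ∈ ℝ such that k₁(x) − k₂(x) = λ for all x ∈ I and g₂(φ) − g₁(φ) = λ·(cos φ / sin φ) for all φ ∈ (0, π). -/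
/-- uniqueness of the decomposition
`f(x) + g(φ) + cot φ · k(x)` of the normalized linearized data about a flat
cloud with `β₀ = sin`, under the normalization `g(π/2) = 0`. -/
theorem flat_cloud_decomposition_uniqueness
    (I : Set ℝ) (hI : I.Nonempty)
    (f₁ f₂ k₁ k₂ : ℝ → ℝ) (g₁ g₂ : ℝ → ℝ)
    (hg₁ : g₁ (Real.pi / 2) = 0) (hg₂ : g₂ (Real.pi / 2) = 0)
    (heq : ∀ x ∈ I, ∀ φ ∈ Set.Ioo 0 Real.pi,
      f₁ x + g₁ φ + (Real.cos φ / Real.sin φ) * k₁ x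
        = f₂ x + g₂ φ + (Real.cos φ / Real.sin φ) * k₂ x) :
    (∀ x ∈ I, f₁ x = f₂ x) ∧
    ∃ lam : ℝ, (∀ x ∈ I, k₁ x - k₂ x = lam) ∧
      ∀ φ ∈ Set.Ioo 0 Real.pi,
        g₂ φ - g₁ φ = lam * (Real.cos φ / Real.sin φ) := by
  have hpi := Real.pi_pos
  have hhalf : Real.pi / 2 ∈ Set.Ioo 0 Real.pi :=
    ⟨by linarith, by linarith⟩
  have hf : ∀ x ∈ I, f₁ x = f₂ x := by
    intro x hx
    have h := heq x hx _ hhalf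
    rw [Real.cos_pi_div_two, hg₁, hg₂] at h
    simpa using h
  refine ⟨hf, ?_⟩
  obtain ⟨x₀, hx₀⟩ := hI
  refine ⟨k₁ x₀ - k₂ x₀, ?_, ?_⟩
  · intro x hx
    have hq : Real.pi / 4 ∈ Set.Ioo 0 Real.pi := ⟨by linarith, by linarith⟩
    have hcs : Real.cos (Real.pi / 4) / Real.sin (Real.pi / 4) = 1 := by
      rw [Real.cos_pi_div_four, Real.sin_pi_div_four]
      norm_num
    have h1 := heq x hx _ hq
    have h2 := heq x₀ hx₀ _ hq
    rw [hcs, hf x hx] at h1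
    rw [hcs, hf x₀ hx₀] at h2
    linarith
  · intro φ hφ
    have h := heq x₀ hx₀ _ hφ
    rw [hf x₀ hx₀] at h
    ring_nf
    ring_nf at h
    linarith
end

section
/- Let I be a nonempty set, Φ a set, and p, q : Φ → ℝ such that the only reals a, b, c with a + b·p(φ) + c·q(φ) = 0 for all φ ∈ Φ are a = b = c = 0. Let f₁, f₂, k₁, k₂, m₁, m₂ : I → ℝ and g₁, g₂ : Φ → ℝ satisfy f₁(x) + g₁(φ) + p(φ)·k₁(x) + q(φ)·m₁(x) = f₂(x) + g₂(φ) + p(φ)·k₂(x) + q(φ)·m₂(x) for all x ∈ I, φ ∈ Φ. Then f₁ − f₂, k₁ − k₂, and m₁ − m₂ are constant functions on I, and for these constants λ₁ = f₁ − f₂, λ₂ = k₁ − k₂, λ₃ = m₁ − m₂ one has g₂(φ) − g₁(φ) = λ₁ + λ₂·p(φ) + λ₃·q(φ) for all φ ∈ Φ. -/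
/-- abstract uniqueness lemma for the decomposition
`f(x) + g(φ) + p(φ)·k(x) + q(φ)·m(x)` of the linearized data when
`(1, p, q)` are linearly independent functions of `φ`. -/
theorem abstract_decomposition_uniqueness
    {I : Type*} [Nonempty I] {Φ : Type*}
    (p q : Φ → ℝ)
    (hindep : ∀ a b c : ℝ, (∀ φ : Φ, a + b * p φ + c * q φ = 0) →
      a = 0 ∧ b = 0 ∧ c = 0)
    (f₁ f₂ k₁ k₂ m₁ m₂ : I → ℝ) (g₁ g₂ : Φ → ℝ)
    (heq : ∀ (x : I) (φ : Φ),
      f₁ x + g₁ φ + p φ * k₁ x + q φ * m₁ x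
        = f₂ x + g₂ φ + p φ * k₂ x + q φ * m₂ x) :
    ∃ lam₁ lam₂ lam₃ : ℝ,
      (∀ x : I, f₁ x - f₂ x = lam₁) ∧
      (∀ x : I, k₁ x - k₂ x = lam₂) ∧
      (∀ x : I, m₁ x - m₂ x = lam₃) ∧
      ∀ φ : Φ, g₂ φ - g₁ φ = lam₁ + lam₂ * p φ + lam₃ * q φ := by
  obtain ⟨x₀⟩ := (inferInstance : Nonempty I)
  refine ⟨f₁ x₀ - f₂ x₀, k₁ x₀ - k₂ x₀, m₁ x₀ - m₂ x₀, ?_, ?_, ?_, ?_⟩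
  all_goals
    first
    | (intro x
       have h := hindep ((f₁ x - f₂ x) - (f₁ x₀ - f₂ x₀))
         ((k₁ x - k₂ x) - (k₁ x₀ - k₂ x₀)) ((m₁ x - m₂ x) - (m₁ x₀ - m₂ x₀))
         (fun φ => by have h1 := heq x φ; have h2 := heq x₀ φ; ring_nf; ring_nf at h1 h2 ⊢; linarith)
       linarith [h.1, h.2.1, h.2.2])
    | (intro φ; have h := heq x₀ φ; ring_nf at h ⊢; linarith)
end

section
/- Let a < b be reals, q : [a, b] → ℝ continuous, c ∈ ℝ, and u : [a, b] → ℝ differentiable with u'(x) = q(x)·u(x) − c for all x ∈ [a, b]. If u(a) = 0 and u(b) = 0, then c = 0 and u(x) = 0 for all x ∈ [a, b]. -/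
/-!
With `Q' = q` and `P' = exp (-Q)`, the function `u · exp (-Q) + c · P` has derivative zero on
`[a, b]`, hence is constant. Comparing its values at the endpoints, where `u` vanishes, gives
`c · (P b - P a) = 0`; since `P` is strictly increasing, `c = 0`, and then `u · exp (-Q) ≡ 0`.
-/

open Set Real

theorem ContinuousOn.exists_hasDerivWithinAt_Icc {E : Type*} [NormedAddCommGroup E]
    [NormedSpace ℝ E] [CompleteSpace E] {f : ℝ → E} {a b : ℝ} (hab : a ≤ b)
    (hf : ContinuousOn f (Icc a b)) :
    ∃ F : ℝ → E, ∀ x ∈ Icc a b, HasDerivWithinAt F (f x) (Icc a b) x := by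
  set g := IccExtend hab ((Icc a b).domRestrict f)
  have hg : Continuous g := hf.domRestrict.Icc_extend'
  refine ⟨fun x => ∫ t in a..x, g t, fun x hx => ?_⟩
  have hgx : g x = f x := IccExtend_of_mem hab _ hx
  exact hgx ▸ (hg.integral_hasStrictDerivAt a x).hasDerivAt.hasDerivWithinAt

theorem constant_of_hasDerivWithinAt_Icc_zero {E : Type*} [NormedAddCommGroup E]
    [NormedSpace ℝ E] {f : ℝ → E} {a b : ℝ}
    (hf : ∀ x ∈ Icc a b, HasDerivWithinAt f 0 (Icc a b) x) : ∀ x ∈ Icc a b, f x = f a :=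
  constant_of_has_deriv_right_zero (fun x hx => (hf x hx).continuousWithinAt) fun x hx =>
    (hf x (Ico_subset_Icc_self hx)).mono_of_mem_nhdsWithin (Icc_mem_nhdsGE_of_mem hx)

theorem hasDerivWithinAt_integratingFactor {s : Set ℝ} {u Q P : ℝ → ℝ} {x p c : ℝ}
    (hu : HasDerivWithinAt u (p * u x - c) s x) (hQ : HasDerivWithinAt Q p s x)
    (hP : HasDerivWithinAt P (exp (-Q x)) s x) :
    HasDerivWithinAt (fun y => u y * exp (-Q y) + c * P y) 0 s x := by
  refine ((hu.mul hQ.neg.exp).add (hP.const_mul c)).congr_deriv ?_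
  simp only [Pi.neg_apply]
  ring

/-- uniqueness for the first-order boundary value problem
`u' = q·u − c` on `[a, b]` with `u(a) = u(b) = 0`: necessarily `c = 0`
and `u ≡ 0`. -/
theorem first_order_bvp_uniqueness
    (a b : ℝ) (hab : a < b)
    (q : ℝ → ℝ) (hq : ContinuousOn q (Set.Icc a b))
    (c : ℝ) (u : ℝ → ℝ)
    (hu : ∀ x ∈ Set.Icc a b,
      HasDerivWithinAt u (q x * u x - c) (Set.Icc a b) x)
    (hua : u a = 0) (hub : u b = 0) :
    c = 0 ∧ ∀ x ∈ Set.Icc a b, u x = 0 := by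
  obtain ⟨Q, hQ⟩ := hq.exists_hasDerivWithinAt_Icc hab.le
  have hexpQ : ContinuousOn (fun x => exp (-Q x)) (Icc a b) := fun x hx =>
    (hQ x hx).neg.exp.continuousWithinAt
  obtain ⟨P, hP⟩ := hexpQ.exists_hasDerivWithinAt_Icc hab.le
  have hconst := constant_of_hasDerivWithinAt_Icc_zero fun x hx =>
    hasDerivWithinAt_integratingFactor (hu x hx) (hQ x hx) (hP x hx)
  have hPab : P a < P b := by
    exact strictMonoOn_of_hasDerivWithinAt_pos (convex_Icc a b)
      (fun x hx => (hP x hx).continuousWithinAt)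
      (fun x hx => (hP x (interior_subset hx)).mono interior_subset) (fun _ _ => exp_pos _)
      (left_mem_Icc.2 hab.le) (right_mem_Icc.2 hab.le) hab
  have hc : c = 0 := by
    have hb := hconst b (right_mem_Icc.2 hab.le)
    simp only [hua, hub, zero_mul, zero_add] at hb
    exact (mul_eq_mul_left_iff.1 hb).resolve_left hPab.ne'
  refine ⟨hc, fun x hx => ?_⟩
  have hux := hconst x hx
  simp only [hua, hc, zero_mul, add_zero] at hux
  exact (mul_eq_zero.1 hux).resolve_right (exp_pos _).ne'
end

section
/- Let a < b be reals, q : [a, b] → ℝ differentiable, and u : [a, b] → ℝ twice differentiable such that −u''(x) + (q·u)'(x) = 0 for all x ∈ [a, b] and u(a) = u(b) = 0. Then u(x) = 0 for all x ∈ [a, b]. -/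
/-!
Since `-u'' + (q u)' = (q u - u')'`, the equation says `u' = q u + c` for a constant `c`.
With a primitive `Q` of `q`, the function `w = u e^{-Q}` has `w' = c e^{-Q}`; since `w`
vanishes at both ends, Rolle's theorem forces `c = 0`, so `w` is constant, equal to
`w a = 0`, and hence `u = 0`.
-/

open Set Real

section Icc

variable {f q : ℝ → ℝ} {a b : ℝ}

theorem eq_left_of_hasDerivWithinAt_Icc_zero
    (hf : ∀ x ∈ Icc a b, HasDerivWithinAt f 0 (Icc a b) x) :
    ∀ x ∈ Icc a b, f x = f a :=
  constant_of_has_deriv_right_zero (fun x hx => (hf x hx).continuousWithinAt) fun x hx =>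
    (hf x (Ico_subset_Icc_self hx)).mono_of_mem_nhdsWithin (Icc_mem_nhdsGE_of_mem hx)

theorem ContinuousOn.hasDerivWithinAt_integral_Icc (hq : ContinuousOn q (Icc a b)) {x : ℝ}
    (hx : x ∈ Icc a b) :
    HasDerivWithinAt (fun y => ∫ t in a..y, q t) (q x) (Icc a b) x :=
  have : Fact (x ∈ Icc a b) := ⟨hx⟩
  intervalIntegral.integral_hasDerivWithinAt_right
    ((hq.mono (uIcc_subset_Icc (left_mem_Icc.2 (hx.1.trans hx.2)) hx)).intervalIntegrable)
    (hq.stronglyMeasurableAtFilter_nhdsWithin measurableSet_Icc x) (hq x hx)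

end Icc

theorem hasDerivWithinAt_mul_exp_neg_of_linear {u Q : ℝ → ℝ} {q c x : ℝ} {s : Set ℝ}
    (hQ : HasDerivWithinAt Q q s x) (hu : HasDerivWithinAt u (q * u x + c) s x) :
    HasDerivWithinAt (fun y => u y * exp (-Q y)) (c * exp (-Q x)) s x :=
  (hu.fun_mul hQ.fun_neg.exp).congr_deriv (by ring)

theorem eqOn_zero_of_hasDerivWithinAt_linear {q u : ℝ → ℝ} {a b c : ℝ} (hab : a < b)
    (hq : ContinuousOn q (Icc a b))
    (hu : ∀ x ∈ Icc a b, HasDerivWithinAt u (q x * u x + c) (Icc a b) x)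
    (hua : u a = 0) (hub : u b = 0) :
    ∀ x ∈ Icc a b, u x = 0 := by
  set Q : ℝ → ℝ := fun y => ∫ t in a..y, q t
  have hw : ∀ x ∈ Icc a b,
      HasDerivWithinAt (fun y => u y * exp (-Q y)) (c * exp (-Q x)) (Icc a b) x :=
    fun x hx =>
      hasDerivWithinAt_mul_exp_neg_of_linear (hq.hasDerivWithinAt_integral_Icc hx) (hu x hx)
  have hc : c = 0 := by
    obtain ⟨ξ, -, hwξ⟩ := exists_hasDerivAt_eq_zero hab
      (fun x hx => (hw x hx).continuousWithinAt) (by simp [hua, hub])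
      fun x hx => (hw x (Ioo_subset_Icc_self hx)).hasDerivAt (Icc_mem_nhds hx.1 hx.2)
    simpa [exp_ne_zero] using hwξ
  subst hc
  intro x hx
  have hwx := eq_left_of_hasDerivWithinAt_Icc_zero (fun y hy => by simpa using hw y hy) x hx
  simpa [hua, exp_ne_zero] using hwx

/-- uniqueness for the second-order homogeneous boundary value
problem `−u'' + (q·u)' = 0` on `[a, b]` with `u(a) = u(b) = 0`.  Here `u'` and
`u''` are the first and second derivatives of `u`, `q'` the derivative of `q`,
so that `(q·u)' = q'·u + q·u'` by the product rule. -/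
theorem second_order_bvp_uniqueness
    (a b : ℝ) (hab : a < b)
    (q q' u u' u'' : ℝ → ℝ)
    (hq : ∀ x ∈ Set.Icc a b, HasDerivWithinAt q (q' x) (Set.Icc a b) x)
    (hu : ∀ x ∈ Set.Icc a b, HasDerivWithinAt u (u' x) (Set.Icc a b) x)
    (hu' : ∀ x ∈ Set.Icc a b, HasDerivWithinAt u' (u'' x) (Set.Icc a b) x)
    (hode : ∀ x ∈ Set.Icc a b,
      -u'' x + (q' x * u x + q x * u' x) = 0)
    (hua : u a = 0) (hub : u b = 0) :
    ∀ x ∈ Set.Icc a b, u x = 0 := by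
  have hflux : ∀ x ∈ Icc a b,
      HasDerivWithinAt (fun y => u' y - q y * u y) 0 (Icc a b) x := fun x hx =>
    ((hu' x hx).fun_sub ((hq x hx).fun_mul (hu x hx))).congr_deriv (by linarith [hode x hx])
  have hfirst : ∀ x ∈ Icc a b,
      HasDerivWithinAt u (q x * u x + (u' a - q a * u a)) (Icc a b) x := fun x hx => by
    have hconst : u' x - q x * u x = u' a - q a * u a :=
      eq_left_of_hasDerivWithinAt_Icc_zero hflux x hx
    exact (hu x hx).congr_deriv (by linarith)
  exact eqOn_zero_of_hasDerivWithinAt_linear hab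
    (fun x hx => (hq x hx).continuousWithinAt) hfirst hua hub
end

section
/- Let Z, X, φ ∈ ℝ with cos φ ≠ 0, let λ₀, δλ ∈ ℝ, let h₀ : ℝ → ℝ be differentiable, let δh : ℝ → ℝ be continuous at x₀, and let x : (−ε, ε) → ℝ be continuous, differentiable at 0, with x(0) = x₀. Suppose Z − (h₀(x(t)) + t·δh(x(t))) = ((λ₀ + t·δλ)·X − x(t))·tan φ for all t ∈ (−ε, ε) and tan φ ≠ h₀'(x₀). Then x'(0) = (δh(x₀) + X·tan φ·δλ) / (tan φ − h₀'(x₀)). -/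
/-- first variation of the intersection abscissa for a moving
cloud, linearizing simultaneously in the height (`h₀ + t·δh`) and the speed
parameter (`λ₀ + t·δλ`):
`δx̃ = (δh(x₀) + X tan φ · δλ) / (tan φ - h₀'(x₀))`. -/
theorem moving_cloud_intersection_first_variation
    (Z X φ : ℝ) (hcos : Real.cos φ ≠ 0)
    (lam₀ δlam : ℝ)
    (h₀ : ℝ → ℝ) (hh₀ : Differentiable ℝ h₀)
    (δh : ℝ → ℝ) (x₀ : ℝ) (hδh : ContinuousAt δh x₀)
    (ε : ℝ) (hε : 0 < ε)
    (x : ℝ → ℝ) (hxc : ContinuousOn x (Set.Ioo (-ε) ε))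
    (hxd : DifferentiableAt ℝ x 0) (hx0 : x 0 = x₀)
    (heq : ∀ t ∈ Set.Ioo (-ε) ε,
      Z - (h₀ (x t) + t * δh (x t))
        = ((lam₀ + t * δlam) * X - x t) * Real.tan φ)
    (hne : Real.tan φ ≠ deriv h₀ x₀) :
    deriv x 0
      = (δh x₀ + X * Real.tan φ * δlam) / (Real.tan φ - deriv h₀ x₀) := by
  set T := Real.tan φ
  have hx : HasDerivAt x (deriv x 0) 0 := hxd.hasDerivAt
  have hxcont : ContinuousAt x 0 := hxd.continuousAt
  -- derivative of f t = t * δh (x t) at 0 is δh x₀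
  have hf : HasDerivAt (fun t => t * δh (x t)) (δh x₀) 0 := by
    rw [hasDerivAt_iff_tendsto_slope]
    have hs : ∀ t ∈ ({(0:ℝ)}ᶜ : Set ℝ),
        δh (x t) = slope (fun t => t * δh (x t)) 0 t := by
      intro t ht
      have ht' : t ≠ 0 := ht
      simp [slope, ht']
    apply Filter.Tendsto.congr' (Filter.eventuallyEq_of_mem self_mem_nhdsWithin hs)
    have : Filter.Tendsto (fun t => δh (x t)) (nhds 0) (nhds (δh x₀)) := by
      have hc : ContinuousAt (fun t => δh (x t)) 0 := by
        apply ContinuousAt.comp (g := δh)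
        · rwa [hx0]
        · exact hxcont
      simpa [hx0] using hc.tendsto
    exact this.mono_left nhdsWithin_le_nhds
  -- u agrees with f near 0
  have h0mem : (0:ℝ) ∈ Set.Ioo (-ε) ε := by constructor <;> simp [hε, neg_lt_zero]
  have hmem : Set.Ioo (-ε) ε ∈ nhds (0:ℝ) :=
    (isOpen_Ioo).mem_nhds h0mem
  have hEq : (fun t => Z - h₀ (x t) + x t * T - (lam₀ + t * δlam) * X * T)
      =ᶠ[nhds (0:ℝ)] (fun t => t * δh (x t)) := by
    filter_upwards [hmem] with t ht
    have := heq t ht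
    ring_nf
    ring_nf at this
    linarith
  -- derivative of u at 0
  have hh : HasDerivAt (fun t => h₀ (x t)) (deriv h₀ x₀ * deriv x 0) 0 := by
    have h1 : HasDerivAt h₀ (deriv h₀ (x 0)) (x 0) := (hh₀ (x 0)).hasDerivAt
    have := h1.comp 0 hx
    rwa [hx0] at this
  have hu : HasDerivAt (fun t => Z - h₀ (x t) + x t * T - (lam₀ + t * δlam) * X * T)
      (-(deriv h₀ x₀ * deriv x 0) + deriv x 0 * T - δlam * X * T) 0 := by
    have h2 : HasDerivAt (fun t : ℝ => (lam₀ + t * δlam) * X * T) (δlam * X * T) 0 := by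
      have : HasDerivAt (fun t : ℝ => lam₀ + t * δlam) δlam 0 := by
        simpa using ((hasDerivAt_id (0:ℝ)).mul_const δlam).const_add lam₀
      simpa using (this.mul_const X).mul_const T
    exact (((hh.const_sub Z).add (hx.mul_const T)).sub h2)
  have hu' : HasDerivAt (fun t => Z - h₀ (x t) + x t * T - (lam₀ + t * δlam) * X * T)
      (δh x₀) 0 := hEq.symm.hasDerivAt_iff.mp hf
  have key : -(deriv h₀ x₀ * deriv x 0) + deriv x 0 * T - δlam * X * T = δh x₀ :=
    hu.unique hu'
  have hT : T - deriv h₀ x₀ ≠ 0 := sub_ne_zero.mpr hne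
  field_simp
  linarith [key]
end
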